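/- For every natural number k ≥ 1, the group defined by the presentation ⟨d, t | dᵏ = 1, t²dtd⁻¹t⁻¹d = 1⟩ is isomorphic to the group defined by the presentation ⟨u, t | (ut⁻²)ᵏ = 1, tut⁻¹u⁻² = 1⟩. -/
import Mathlib

/-- Relators for the presentation `⟨d, t | dᵏ, t²dtd⁻¹t⁻¹d⟩`,
with generators `d = 0`, `t = 1`. -/
def relsDT' (k : ℕ) : Set (FreeGroup (Fin 2)) :=
  let d : FreeGroup (Fin 2) := FreeGroup.of 0
  let t : FreeGroup (Fin 2) := FreeGroup.of 1
  {d ^ k, t ^ 2 * d * t * d⁻¹ * t⁻¹ * d}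

/-- Relators for the presentation `⟨u, t | (ut⁻²)ᵏ, tut⁻¹u⁻²⟩`,
with generators `u = 0`, `t = 1`. -/
def relsUT (k : ℕ) : Set (FreeGroup (Fin 2)) :=
  let u : FreeGroup (Fin 2) := FreeGroup.of 0
  let t : FreeGroup (Fin 2) := FreeGroup.of 1
  {(u * t⁻¹ * t⁻¹) ^ k, t * u * t⁻¹ * u⁻¹ * u⁻¹}

lemma presAux.rel_one {α : Type*} (rels : Set (FreeGroup α)) {r : FreeGroup α} (h : r ∈ rels) :
    PresentedGroup.mk rels r = 1 := by
  have : r ∈ Subgroup.normalClosure rels := Subgroup.subset_normalClosure h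
  exact (QuotientGroup.eq_one_iff r).mpr this

theorem presentedGroup_relsDT'_iso_relsUT (k : ℕ) (hk : 1 ≤ k) :
    Nonempty (PresentedGroup (relsDT' k) ≃* PresentedGroup (relsUT k)) := by
  set U : PresentedGroup (relsUT k) := PresentedGroup.of 0 with hU
  set T : PresentedGroup (relsUT k) := PresentedGroup.of 1 with hT
  set D : PresentedGroup (relsDT' k) := PresentedGroup.of 0 with hD
  set S : PresentedGroup (relsDT' k) := PresentedGroup.of 1 with hS
  have hrUT1 : (U * T⁻¹ * T⁻¹) ^ k = 1 := by
    have := presAux.rel_one (relsUT k) (r := (FreeGroup.of 0 * (FreeGroup.of 1)⁻¹ * (FreeGroup.of 1)⁻¹) ^ k)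
      (by simp [relsUT])
    simpa [map_pow, map_mul, map_inv, hU, hT, PresentedGroup.of] using this
  have hrUT2 : T * U * T⁻¹ * U⁻¹ * U⁻¹ = 1 := by
    have := presAux.rel_one (relsUT k)
      (r := FreeGroup.of 1 * FreeGroup.of 0 * (FreeGroup.of 1)⁻¹ * (FreeGroup.of 0)⁻¹ * (FreeGroup.of 0)⁻¹)
      (by simp [relsUT])
    simpa [map_mul, map_inv, hU, hT, PresentedGroup.of] using this
  have hrDT1 : D ^ k = 1 := by
    have := presAux.rel_one (relsDT' k) (r := (FreeGroup.of 0 : FreeGroup (Fin 2)) ^ k)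
      (by simp [relsDT'])
    simpa [map_pow, hD, PresentedGroup.of] using this
  have hrDT2 : S ^ 2 * D * S * D⁻¹ * S⁻¹ * D = 1 := by
    have := presAux.rel_one (relsDT' k)
      (r := (FreeGroup.of 1 : FreeGroup (Fin 2)) ^ 2 * FreeGroup.of 0 * FreeGroup.of 1 *
        (FreeGroup.of 0)⁻¹ * (FreeGroup.of 1)⁻¹ * FreeGroup.of 0)
      (by simp [relsDT'])
    simpa [map_mul, map_inv, map_pow, hD, hS, PresentedGroup.of] using this
  -- forward map: d ↦ U T⁻², t ↦ T
  have hf : ∀ r ∈ relsDT' k,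
      FreeGroup.lift (![U * T⁻¹ * T⁻¹, T] : Fin 2 → _) r = 1 := by
    intro r hr
    simp only [relsDT', Set.mem_insert_iff, Set.mem_singleton_iff] at hr
    rcases hr with rfl | rfl
    · simpa [map_pow, map_mul, map_inv] using hrUT1
    · simp only [map_mul, map_inv, map_pow, FreeGroup.lift_apply_of, Matrix.cons_val_zero,
        Matrix.cons_val_one, Matrix.head_cons]
      have hinv : T * U⁻¹ * T⁻¹ = U⁻¹ * U⁻¹ := by
        have h2 : T * U * T⁻¹ = U * U := by
          calc T * U * T⁻¹ = (T * U * T⁻¹ * U⁻¹ * U⁻¹) * (U * U) := by group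
          _ = 1 * (U * U) := by rw [hrUT2]
          _ = U * U := one_mul _
        calc T * U⁻¹ * T⁻¹ = (T * U * T⁻¹)⁻¹ := by group
        _ = (U * U)⁻¹ := by rw [h2]
        _ = U⁻¹ * U⁻¹ := by group
      have : T ^ 2 * (U * T⁻¹ * T⁻¹) * T * (U * T⁻¹ * T⁻¹)⁻¹ * T⁻¹ * (U * T⁻¹ * T⁻¹)
          = T ^ 2 * (U * (T * U⁻¹ * T⁻¹) * U) * T⁻¹ * T⁻¹ := by group
      rw [this, hinv]; group
  have hg : ∀ r ∈ relsUT k,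
      FreeGroup.lift (![D * S * S, S] : Fin 2 → _) r = 1 := by
    intro r hr
    simp only [relsUT, Set.mem_insert_iff, Set.mem_singleton_iff] at hr
    rcases hr with rfl | rfl
    · simp only [map_pow, map_mul, map_inv, FreeGroup.lift_apply_of, Matrix.cons_val_zero,
        Matrix.cons_val_one, Matrix.head_cons]
      have : D * S * S * S⁻¹ * S⁻¹ = D := by group
      rw [this]; exact hrDT1
    · simp only [map_mul, map_inv, FreeGroup.lift_apply_of, Matrix.cons_val_zero,
        Matrix.cons_val_one, Matrix.head_cons]
      have : S * (D * S * S) * S⁻¹ * (D * S * S)⁻¹ * (D * S * S)⁻¹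
          = (D * (S ^ 2 * D * S * D⁻¹ * S⁻¹ * D) * D⁻¹)⁻¹ := by group
      rw [this, hrDT2]; group
  let φ : PresentedGroup (relsDT' k) →* PresentedGroup (relsUT k) := PresentedGroup.toGroup hf
  let ψ : PresentedGroup (relsUT k) →* PresentedGroup (relsDT' k) := PresentedGroup.toGroup hg
  refine ⟨MonoidHom.toMulEquiv φ ψ ?_ ?_⟩
  · ext x
    fin_cases x <;>
      simp [φ, ψ, PresentedGroup.toGroup.of, map_mul, map_inv, hD, hS, hU, hT] <;> group
  · ext x
    fin_cases x <;>
      simp [φ, ψ, PresentedGroup.toGroup.of, map_mul, map_inv, hD, hS, hU, hT] <;> group
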